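/- Suppose Ω ⊆ ℝⁿ (n ≥ 2) is open and locally connected on the boundary, and let f : Ω → ℝⁿ be a δ-monotone map (for some δ > 0) that is bounded on bounded subsets of Ω. Then f has a continuous extension to the closure of Ω, and this extension is also δ-monotone. -/

import Mathlib

open Set Metric
open scoped RealInnerProductSpace

/-- A map `f` is *δ-monotone* on a set `Ω` if
`⟪f x - f y, x - y⟫ ≥ δ ‖f x - f y‖ ‖x - y‖` for all `x, y ∈ Ω`. -/
def DeltaMonotoneOn {n : ℕ} (δ : ℝ)
    (f : EuclideanSpace ℝ (Fin n) → EuclideanSpace ℝ (Fin n))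
    (Ω : Set (EuclideanSpace ℝ (Fin n))) : Prop :=
  ∀ x ∈ Ω, ∀ y ∈ Ω, δ * (‖f x - f y‖ * ‖x - y‖) ≤ ⟪f x - f y, x - y⟫

/-- An open set `Ω` is *locally connected on the boundary* if for every `b ∈ ∂Ω` and `r > 0`
there is an open set `U` with `b ∈ U ⊆ B(b, r)` such that `U ∩ Ω` is connected. -/
def LocallyConnectedOnBoundary {n : ℕ} (Ω : Set (EuclideanSpace ℝ (Fin n))) : Prop :=
  ∀ b ∈ frontier Ω, ∀ r > 0, ∃ U : Set (EuclideanSpace ℝ (Fin n)),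
    IsOpen U ∧ b ∈ U ∧ U ⊆ ball b r ∧ IsConnected (U ∩ Ω)

/-!
Call `A` a directional cluster value of `f` at `b` from the direction `u` if `f xₖ → A` along
points `xₖ → b` of `Ω` whose unit directions `(xₖ - b) / ‖xₖ - b‖` tend to `u`. Passing to the
limit in δ-monotonicity shows that two different cluster values come from directions at least
`2δ` apart. At an interior point every direction of the unit sphere carries a cluster value and
the sphere is connected (`n ≥ 2`), so all cluster values coincide; comparing two opposite
directions identifies the common value with `f b`, hence `f` is continuous on `Ω`. At a boundary
point the cluster values are therefore finitely many, whereas two distinct ones would produce,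
by local connectedness and the intermediate value theorem, a cluster value at every intermediate
distance; so `f` has a limit there. These limits define the extension, which is δ-monotone
because the closure of the graph of a δ-monotone map is δ-monotone.
-/

open Filter Topology

theorem MapClusterPt.mem_of_isClosed {X α : Type*} [TopologicalSpace X] {x : X} {F : Filter α}
    {u : α → X} {s : Set X} (hx : MapClusterPt x F u) (hs : IsClosed s)
    (hu : ∀ᶠ a in F, u a ∈ s) : x ∈ s :=
  hs.closure_subset (hx.mem_closure_of_mem s hu)

theorem mem_closure_graphOn_of_tendsto {X Y : Type*} [TopologicalSpace X] [TopologicalSpace Y]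
    {s : Set X} {g : X → Y} {x : X} {y : Y} (hx : x ∈ closure s)
    (h : Tendsto g (𝓝[s] x) (𝓝 y)) : (x, y) ∈ closure (s.graphOn g) := by
  have := mem_closure_iff_nhdsWithin_neBot.1 hx
  exact mem_closure_of_tendsto ((tendsto_id.mono_left nhdsWithin_le_nhds).prodMk_nhds h)
    (eventually_mem_nhdsWithin.mono fun z hz => ⟨z, hz, rfl⟩)

theorem exists_eventually_norm_le_of_isBounded_image {X Y : Type*} [PseudoMetricSpace X]
    [SeminormedAddCommGroup Y] {s : Set X} {g : X → Y}
    (hg : ∀ B : Set X, Bornology.IsBounded B → Bornology.IsBounded (g '' (B ∩ s))) (b : X) :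
    ∃ M, ∀ᶠ x in 𝓝[s] b, ‖g x‖ ≤ M := by
  obtain ⟨M, hM⟩ := isBounded_iff_forall_norm_le.1 (hg (ball b 1) isBounded_ball)
  exact ⟨M, mem_nhdsWithin.2 ⟨ball b 1, isOpen_ball, mem_ball_self one_pos,
    fun x hx => hM _ ⟨x, hx, rfl⟩⟩⟩

theorem finite_of_isCompact_of_pairwise_le_dist {X ι : Type*} [PseudoMetricSpace X] {K : Set X}
    (hK : IsCompact K) {u : ι → X} (hu : ∀ i, u i ∈ K) {ε : ℝ} (hε : 0 < ε)
    (hsep : Pairwise fun i j => ε ≤ dist (u i) (u j)) : Finite ι := by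
  obtain ⟨t, -, htfin, hcover⟩ := finite_approx_of_totallyBounded hK.totallyBounded (ε / 2)
    (half_pos hε)
  have hnet : ∀ i, ∃ y : t, dist (u i) y < ε / 2 := fun i => by
    obtain ⟨y, hy, hiy⟩ := mem_iUnion₂.1 (hcover (hu i))
    exact ⟨⟨y, hy⟩, hiy⟩
  choose y hy using hnet
  have : Finite t := htfin.to_subtype
  refine Finite.of_injective y fun i j hij => by_contra fun hne => ?_
  have hi := hy i
  rw [hij] at hi
  linarith [hsep hne, hy j, dist_triangle_right (u i) (u j) (y j)]

theorem frequently_eq_of_frequently_lt_of_frequently_gt {X : Type*} [PseudoMetricSpace X]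
    {s : Set X} {b : X}
    (hlc : ∀ r > 0, ∃ U : Set X, IsOpen U ∧ b ∈ U ∧ U ⊆ ball b r ∧ IsConnected (U ∩ s))
    {φ : X → ℝ} (hφ : ContinuousOn φ s) {ρ : ℝ}
    (hlt : ∃ᶠ x in 𝓝[s] b, φ x < ρ) (hgt : ∃ᶠ x in 𝓝[s] b, ρ < φ x) :
    ∃ᶠ x in 𝓝[s] b, φ x = ρ := by
  rw [nhdsWithin_basis_ball.frequently_iff] at hlt hgt ⊢
  intro r hr
  obtain ⟨U, hU, hbU, hUr, hUconn⟩ := hlc r hr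
  obtain ⟨ε, hε, hεU⟩ := Metric.isOpen_iff.1 hU b hbU
  obtain ⟨x, ⟨hxε, hxs⟩, hx⟩ := hlt ε hε
  obtain ⟨y, ⟨hyε, hys⟩, hy⟩ := hgt ε hε
  obtain ⟨z, ⟨hzU, hzs⟩, hz⟩ := hUconn.isPreconnected.intermediate_value ⟨hεU hxε, hxs⟩
    ⟨hεU hyε, hys⟩ (hφ.mono inter_subset_right) ⟨hx.le, hy.le⟩
  exact ⟨z, ⟨hUr hzU, hzs⟩, hz⟩

section InnerProductSpace

variable {E : Type*} [NormedAddCommGroup E] [InnerProductSpace ℝ E] {Ω : Set E} {f : E → E}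
  {δ : ℝ}

theorem le_inner_of_mem_closure_graphOn
    (hf : ∀ x ∈ Ω, ∀ y ∈ Ω, δ * (‖f x - f y‖ * ‖x - y‖) ≤ ⟪f x - f y, x - y⟫)
    {x y A B : E} (hx : (x, A) ∈ closure (Ω.graphOn f)) (hy : (y, B) ∈ closure (Ω.graphOn f)) :
    δ * (‖A - B‖ * ‖x - y‖) ≤ ⟪A - B, x - y⟫ := by
  have hsub : closure (Ω.graphOn f ×ˢ Ω.graphOn f) ⊆
      {p | δ * (‖p.1.2 - p.2.2‖ * ‖p.1.1 - p.2.1‖) ≤ ⟪p.1.2 - p.2.2, p.1.1 - p.2.1⟫} := by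
    refine closure_minimal ?_ (isClosed_le (by fun_prop) (by fun_prop))
    rintro ⟨⟨x, A⟩, ⟨y, B⟩⟩ h
    obtain ⟨⟨hx, rfl⟩, hy, rfl⟩ : (x ∈ Ω ∧ f x = A) ∧ y ∈ Ω ∧ f y = B := by
      simpa only [mem_prod, mem_graphOn] using h
    exact hf x hx y hy
  rw [closure_prod_eq] at hsub
  exact hsub (mk_mem_prod hx hy)

theorem two_mul_le_norm_sub_of_le_inner {A B u v : E} (hAB : A ≠ B)
    (hu : δ * ‖A - B‖ ≤ ⟪A - B, u⟫) (hv : δ * ‖B - A‖ ≤ ⟪B - A, v⟫) : 2 * δ ≤ ‖u - v‖ := by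
  rw [← neg_sub A B, norm_neg, inner_neg_left] at hv
  have hpos : 0 < ‖A - B‖ := norm_pos_iff.2 (sub_ne_zero.2 hAB)
  have : 2 * δ * ‖A - B‖ ≤ ‖A - B‖ * ‖u - v‖ := calc
    2 * δ * ‖A - B‖ ≤ ⟪A - B, u - v⟫ := by rw [inner_sub_right]; linarith
    _ ≤ ‖A - B‖ * ‖u - v‖ := real_inner_le_norm _ _
  nlinarith

def IsDirectionalClusterPt (f : E → E) (Ω : Set E) (b u A : E) : Prop :=
  MapClusterPt (u, A) (𝓝[Ω \ {b}] b) fun x => (‖x - b‖⁻¹ • (x - b), f x)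

namespace IsDirectionalClusterPt

variable {b u v A B : E}

theorem norm_eq_one (h : IsDirectionalClusterPt f Ω b u A) : ‖u‖ = 1 := by
  refine mem_sphere_zero_iff_norm.1 ((h.tendsto_comp continuous_fst.continuousAt).mem_of_isClosed
    isClosed_sphere ?_)
  filter_upwards [self_mem_nhdsWithin] with x hx
  have : ‖x - b‖ ≠ 0 := norm_ne_zero_iff.2 (sub_ne_zero.2 hx.2)
  simp [norm_smul, this]

theorem frequently_dist_lt (h : IsDirectionalClusterPt f Ω b u A) {r : ℝ} (hr : 0 < r) :
    ∃ᶠ x in 𝓝[Ω \ {b}] b, dist (f x) A < r :=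
  (mapClusterPt_iff_frequently.1 h _ (prod_mem_nhds univ_mem (ball_mem_nhds A hr))).mono
    fun _ hx => hx.2

theorem mem_closure_graphOn (h : IsDirectionalClusterPt f Ω b u A) :
    (b, A) ∈ closure (Ω.graphOn f) := by
  refine mem_closure_iff_nhds.2 fun t ht => ?_
  obtain ⟨U, hU, V, hV, hUV⟩ := mem_nhds_prod_iff.1 ht
  obtain ⟨x, hxV, hxU, hxΩ⟩ :=
    ((mapClusterPt_iff_frequently.1 h _ (prod_mem_nhds univ_mem hV)).and_eventually
      (inter_mem (mem_nhdsWithin_of_mem_nhds hU) self_mem_nhdsWithin)).exists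
  exact ⟨(x, f x), hUV ⟨hxU, hxV.2⟩, x, hxΩ.1, rfl⟩

theorem le_inner
    (hf : ∀ x ∈ Ω, ∀ y ∈ Ω, δ * (‖f x - f y‖ * ‖x - y‖) ≤ ⟪f x - f y, x - y⟫)
    (h : IsDirectionalClusterPt f Ω b u A) (hB : (b, B) ∈ closure (Ω.graphOn f)) :
    δ * ‖A - B‖ ≤ ⟪A - B, u⟫ := by
  refine h.mem_of_isClosed (s := {p | δ * ‖p.2 - B‖ ≤ ⟪p.2 - B, p.1⟫})
    (isClosed_le (by fun_prop) (by fun_prop)) ?_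
  filter_upwards [self_mem_nhdsWithin] with x hx
  have hpos : 0 < ‖x - b‖ := norm_pos_iff.2 (sub_ne_zero.2 hx.2)
  have := le_inner_of_mem_closure_graphOn hf (subset_closure ⟨x, hx.1, rfl⟩) hB
  rw [real_inner_smul_right, le_inv_mul_iff₀ hpos]
  linarith

theorem two_mul_le_norm_sub
    (hf : ∀ x ∈ Ω, ∀ y ∈ Ω, δ * (‖f x - f y‖ * ‖x - y‖) ≤ ⟪f x - f y, x - y⟫)
    (hA : IsDirectionalClusterPt f Ω b u A) (hB : IsDirectionalClusterPt f Ω b v B)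
    (hAB : A ≠ B) : 2 * δ ≤ ‖u - v‖ :=
  two_mul_le_norm_sub_of_le_inner hAB (hA.le_inner hf hB.mem_closure_graphOn)
    (hB.le_inner hf hA.mem_closure_graphOn)

end IsDirectionalClusterPt

variable [FiniteDimensional ℝ E] {b : E} {M : ℝ}

theorem exists_isDirectionalClusterPt (hM : ∀ᶠ x in 𝓝[Ω \ {b}] b, ‖f x‖ ≤ M)
    {C : Set (E × E)} (hC : IsClosed C)
    (hfreq : ∃ᶠ x in 𝓝[Ω \ {b}] b, (‖x - b‖⁻¹ • (x - b), f x) ∈ C) :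
    ∃ p ∈ C, IsDirectionalClusterPt f Ω b p.1 p.2 := by
  have hK : IsCompact (sphere (0 : E) 1 ×ˢ closedBall (0 : E) M ∩ C) :=
    ((isCompact_sphere 0 1).prod (isCompact_closedBall 0 M)).inter_right hC
  obtain ⟨p, hp, hcl⟩ := hK.exists_mapClusterPt_of_frequently <| hfreq.and_eventually
    (hM.and self_mem_nhdsWithin) |>.mono fun x ⟨hxC, hxM, hx⟩ => by
      have : ‖x - b‖ ≠ 0 := norm_ne_zero_iff.2 (sub_ne_zero.2 hx.2)
      exact ⟨⟨by simp [norm_smul, this], by simpa using hxM⟩, hxC⟩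
  exact ⟨p, hp.2, hcl⟩

theorem tendsto_of_forall_isDirectionalClusterPt (hM : ∀ᶠ x in 𝓝[Ω \ {b}] b, ‖f x‖ ≤ M)
    {A : E} (h : ∀ u B, IsDirectionalClusterPt f Ω b u B → B = A) :
    Tendsto f (𝓝[Ω \ {b}] b) (𝓝 A) := by
  refine Metric.tendsto_nhds.2 fun ε hε => ?_
  by_contra hnot
  obtain ⟨⟨u, B⟩, hB, hcl⟩ := exists_isDirectionalClusterPt hM
    (C := {p | ε ≤ dist p.2 A}) (isClosed_le continuous_const (by fun_prop))
    (by simpa only [not_eventually, not_lt, mem_ofPred_eq] using hnot)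
  have : ε ≤ dist B A := hB
  rw [h u B hcl, dist_self] at this
  linarith

theorem exists_isDirectionalClusterPt_of_mem_nhds (hΩ : Ω ∈ 𝓝 b)
    (hM : ∀ᶠ x in 𝓝[Ω \ {b}] b, ‖f x‖ ≤ M) {w : E} (hw : ‖w‖ = 1) :
    ∃ A, IsDirectionalClusterPt f Ω b w A := by
  have hray : Tendsto (fun t : ℝ => b + t • w) (𝓝[>] 0) (𝓝[Ω \ {b}] b) := by
    have hcont : Tendsto (fun t : ℝ => b + t • w) (𝓝 0) (𝓝 b) :=
      (by fun_prop : Continuous fun t : ℝ => b + t • w).tendsto' 0 b (by simp)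
    refine tendsto_nhdsWithin_iff.2 ⟨hcont.mono_left nhdsWithin_le_nhds, ?_⟩
    filter_upwards [hcont.mono_left nhdsWithin_le_nhds hΩ, self_mem_nhdsWithin] with t ht htpos
    refine ⟨ht, fun h => ?_⟩
    rcases smul_eq_zero.1 (by simpa using h : t • w = 0) with h0 | h0
    · exact (htpos : 0 < t).ne' h0
    · simp [h0] at hw
  have hdir : ∀ᶠ t in 𝓝[>] (0 : ℝ), ‖b + t • w - b‖⁻¹ • (b + t • w - b) = w :=
    eventually_mem_nhdsWithin.mono fun t (ht : 0 < t) => by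
      simp [norm_smul, hw, abs_of_pos ht, smul_smul, inv_mul_cancel₀ ht.ne']
  obtain ⟨⟨u, A⟩, rfl, hcl⟩ := exists_isDirectionalClusterPt hM
    (C := Prod.fst ⁻¹' {w}) (isClosed_singleton.preimage continuous_fst)
    (hray.frequently hdir.frequently)
  exact ⟨A, hcl⟩

theorem IsDirectionalClusterPt.eq_of_mem_nhds (hE : 1 < Module.rank ℝ E)
    (hf : ∀ x ∈ Ω, ∀ y ∈ Ω, δ * (‖f x - f y‖ * ‖x - y‖) ≤ ⟪f x - f y, x - y⟫) (hδ : 0 < δ)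
    (hΩ : Ω ∈ 𝓝 b) (hM : ∀ᶠ x in 𝓝[Ω \ {b}] b, ‖f x‖ ≤ M) {u v A B : E}
    (hA : IsDirectionalClusterPt f Ω b u A) (hB : IsDirectionalClusterPt f Ω b v B) : A = B := by
  set T := {w | IsDirectionalClusterPt f Ω b w A}
  have hT : IsClosed T :=
    isClosed_setOfPred_clusterPt.preimage (by fun_prop : Continuous fun w : E => (w, A))
  -- `T` is relatively open in the sphere, since directions closer than `2δ` share their values.
  have hsphere : sphere (0 : E) 1 ⊆ T := by
    by_contra hnot
    obtain ⟨z, hz, hzU, hzT⟩ := (isConnected_sphere hE 0 zero_le_one).isPreconnected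
      (⋃ w ∈ T, ball w (2 * δ)) Tᶜ (isOpen_biUnion fun _ _ => isOpen_ball) hT.isOpen_compl
      (fun z _ => (em (z ∈ T)).imp (fun hzT => mem_biUnion hzT (mem_ball_self (by positivity)))
        id)
      ⟨u, mem_sphere_zero_iff_norm.2 hA.norm_eq_one,
        mem_biUnion hA (mem_ball_self (by positivity))⟩
      (not_subset.1 hnot)
    obtain ⟨w, hwT, hzw⟩ := mem_iUnion₂.1 hzU
    obtain ⟨C, hC⟩ :=
      exists_isDirectionalClusterPt_of_mem_nhds hΩ hM (mem_sphere_zero_iff_norm.1 hz)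
    have hCA : C = A := by
      by_contra hCA
      exact (hC.two_mul_le_norm_sub hf hwT hCA).not_gt (by rwa [← dist_eq_norm])
    exact hzT (show IsDirectionalClusterPt f Ω b z A from hCA ▸ hC)
  by_contra hAB
  have := hB.two_mul_le_norm_sub hf (hsphere (mem_sphere_zero_iff_norm.2 hB.norm_eq_one))
    (Ne.symm hAB)
  rw [sub_self, norm_zero] at this
  linarith

theorem continuousWithinAt_of_deltaMonotone_of_mem_nhds (hE : 1 < Module.rank ℝ E)
    (hf : ∀ x ∈ Ω, ∀ y ∈ Ω, δ * (‖f x - f y‖ * ‖x - y‖) ≤ ⟪f x - f y, x - y⟫) (hδ : 0 < δ)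
    (hΩ : Ω ∈ 𝓝 b) (hM : ∀ᶠ x in 𝓝[Ω \ {b}] b, ‖f x‖ ≤ M) : ContinuousWithinAt f Ω b := by
  rw [← continuousWithinAt_sdiff_self]
  refine tendsto_of_forall_isDirectionalClusterPt hM fun u B hB => ?_
  have hb : (b, f b) ∈ closure (Ω.graphOn f) := subset_closure ⟨b, mem_of_mem_nhds hΩ, rfl⟩
  obtain ⟨B', hB'⟩ := exists_isDirectionalClusterPt_of_mem_nhds hΩ hM
    (by rw [norm_neg, hB.norm_eq_one] : ‖-u‖ = 1)
  have h₁ := hB.le_inner hf hb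
  have h₂ := hB'.le_inner hf hb
  rw [← hB.eq_of_mem_nhds hE hf hδ hΩ hM hB', inner_neg_right] at h₂
  have : ‖B - f b‖ ≤ 0 := by nlinarith [norm_nonneg (B - f b)]
  exact sub_eq_zero.1 (norm_le_zero_iff.1 this)

theorem finite_setOf_isDirectionalClusterPt
    (hf : ∀ x ∈ Ω, ∀ y ∈ Ω, δ * (‖f x - f y‖ * ‖x - y‖) ≤ ⟪f x - f y, x - y⟫) (hδ : 0 < δ) :
    {A | ∃ u, IsDirectionalClusterPt f Ω b u A}.Finite := by
  choose u hu using fun A : {A | ∃ u, IsDirectionalClusterPt f Ω b u A} => A.2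
  refine Set.finite_coe_iff.1 <| finite_of_isCompact_of_pairwise_le_dist
    (isCompact_sphere (0 : E) 1) (fun A => mem_sphere_zero_iff_norm.2 (hu A).norm_eq_one)
    (mul_pos two_pos hδ) fun A B hAB => ?_
  show 2 * δ ≤ dist (u A) (u B)
  rw [dist_eq_norm]
  exact (hu A).two_mul_le_norm_sub hf (hu B) (Subtype.coe_injective.ne hAB)

theorem exists_tendsto_of_deltaMonotone_of_notMem
    (hf : ∀ x ∈ Ω, ∀ y ∈ Ω, δ * (‖f x - f y‖ * ‖x - y‖) ≤ ⟪f x - f y, x - y⟫) (hδ : 0 < δ)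
    (hlc : ∀ r > 0, ∃ U : Set E, IsOpen U ∧ b ∈ U ∧ U ⊆ ball b r ∧ IsConnected (U ∩ Ω))
    (hcont : ContinuousOn f Ω) (hM : ∀ᶠ x in 𝓝[Ω \ {b}] b, ‖f x‖ ≤ M) (hb : b ∈ closure Ω)
    (hbΩ : b ∉ Ω) : ∃ A, Tendsto f (𝓝[Ω] b) (𝓝 A) := by
  have hl : Ω \ {b} = Ω := sdiff_singleton_eq_self hbΩ
  have : (𝓝[Ω \ {b}] b).NeBot := by rw [hl]; exact mem_closure_iff_nhdsWithin_neBot.1 hb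
  obtain ⟨⟨u₀, A₀⟩, -, h₀⟩ := exists_isDirectionalClusterPt hM isClosed_univ
    (Frequently.of_forall fun _ => trivial)
  refine ⟨A₀, hl ▸ tendsto_of_forall_isDirectionalClusterPt hM fun u₁ A₁ h₁ =>
    by_contra fun hne => ?_⟩
  have hlevels : Ioo 0 (dist A₁ A₀) ⊆
      (dist · A₀) '' {A | ∃ u, IsDirectionalClusterPt f Ω b u A} := by
    rintro ρ ⟨hρ, hρA⟩
    have hlt := h₀.frequently_dist_lt hρ
    have hgt : ∃ᶠ x in 𝓝[Ω \ {b}] b, ρ < dist (f x) A₀ :=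
      (h₁.frequently_dist_lt (sub_pos.2 hρA)).mono fun x hx => by
        linarith [dist_triangle_left A₁ A₀ (f x)]
    rw [hl] at hlt hgt
    have hlevel := frequently_eq_of_frequently_lt_of_frequently_gt hlc
      (by fun_prop : ContinuousOn (fun x => dist (f x) A₀) Ω) hlt hgt
    rw [← hl] at hlevel
    obtain ⟨⟨u, V⟩, hV, hcl⟩ := exists_isDirectionalClusterPt hM (C := {p | dist p.2 A₀ = ρ})
      (isClosed_eq (by fun_prop) continuous_const) hlevel
    exact ⟨V, ⟨u, hcl⟩, hV⟩
  exact (Ioo_infinite (dist_pos.2 hne)).mono hlevels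
    ((finite_setOf_isDirectionalClusterPt hf hδ).image _)

end InnerProductSpace

/-- A δ-monotone map on an open set `Ω ⊆ ℝⁿ` (`n ≥ 2`) that is locally connected on the
boundary, bounded on bounded subsets of `Ω`, extends continuously to `closure Ω`, and the
extension is δ-monotone. -/
theorem deltaMonotone_extension {n : ℕ} (hn : 2 ≤ n)
    (Ω : Set (EuclideanSpace ℝ (Fin n))) (hopen : IsOpen Ω)
    (hlc : LocallyConnectedOnBoundary Ω) (δ : ℝ) (hδ : 0 < δ)
    (f : EuclideanSpace ℝ (Fin n) → EuclideanSpace ℝ (Fin n))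
    (hf : DeltaMonotoneOn δ f Ω)
    (hbdd : ∀ B : Set (EuclideanSpace ℝ (Fin n)), Bornology.IsBounded B →
      Bornology.IsBounded (f '' (B ∩ Ω))) :
    ∃ g : EuclideanSpace ℝ (Fin n) → EuclideanSpace ℝ (Fin n),
      ContinuousOn g (closure Ω) ∧ (∀ x ∈ Ω, g x = f x) ∧
      DeltaMonotoneOn δ g (closure Ω) := by
  have hE : 1 < Module.rank ℝ (EuclideanSpace ℝ (Fin n)) := by
    rw [← Module.finrank_eq_rank, finrank_euclideanSpace_fin]
    exact_mod_cast hn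
  have hM (b) : ∃ M, ∀ᶠ x in 𝓝[Ω \ {b}] b, ‖f x‖ ≤ M :=
    exists_eventually_norm_le_of_isBounded_image (fun B hB =>
      (hbdd B hB).subset (image_mono (inter_subset_inter_right B sdiff_subset))) b
  have hcont : ContinuousOn f Ω := by
    intro x hx
    obtain ⟨M, hMx⟩ := hM x
    exact continuousWithinAt_of_deltaMonotone_of_mem_nhds hE hf hδ (hopen.mem_nhds hx) hMx
  have hlim : ∀ b ∈ closure Ω, ∃ A, Tendsto f (𝓝[Ω] b) (𝓝 A) := by
    intro b hb
    by_cases hbΩ : b ∈ Ω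
    · exact ⟨f b, hcont b hbΩ⟩
    · obtain ⟨M, hM⟩ := hM b
      have hfr : b ∈ frontier Ω := ⟨hb, by rwa [hopen.interior_eq]⟩
      exact exists_tendsto_of_deltaMonotone_of_notMem hf hδ (hlc b hfr) hcont hM hb hbΩ
  refine ⟨extendFrom Ω f, continuousOn_extendFrom subset_rfl hlim, extendFrom_extends hcont,
    fun x hx y hy => le_inner_of_mem_closure_graphOn hf ?_ ?_⟩
  · exact mem_closure_graphOn_of_tendsto hx (tendsto_extendFrom (hlim x hx))
  · exact mem_closure_graphOn_of_tendsto hy (tendsto_extendFrom (hlim y hy))
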